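/- Let n ≥ 1 and let R = ℤ[t,t⁻¹] be the ring of Laurent polynomials over ℤ. Consider the R-submodule M = {(p, q) ∈ R × R : (tⁿ − 1) divides (p − q) in R} of R × R. Then M is a free R-module with basis {(1 − tⁿ, 0), (1, 1)}; that is, the pair of elements (1 − tⁿ, 0) and (1, 1) is R-linearly independent and spans M over R. -/

import Mathlib

open LaurentPolynomial

section PairBasis

variable {R : Type*} [CommRing R]

theorem mem_span_pair_one_one_iff (d : R) (x : R × R) :
    x ∈ Submodule.span R {((d, 0) : R × R), (1, 1)} ↔ d ∣ x.1 - x.2 := by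
  rw [Submodule.mem_span_pair]
  constructor
  · rintro ⟨a, b, rfl⟩
    exact ⟨a, by simp [mul_comm]⟩
  · rintro ⟨c, hc⟩
    refine ⟨c, x.2, Prod.ext ?_ ?_⟩
    · simp only [Prod.fst_add, Prod.smul_fst, smul_eq_mul]
      linear_combination -hc
    · simp

theorem linearIndependent_pair_one_one {d : R} (hd : d ∈ nonZeroDivisors R) :
    LinearIndependent R ![((d, 0) : R × R), (1, 1)] := by
  rw [LinearIndependent.pair_iff]
  intro a b hab
  have hb : b = 0 := by simpa using congrArg Prod.snd hab
  have had : a * d = 0 := by simpa [hb] using congrArg Prod.fst hab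
  exact ⟨(mem_nonZeroDivisors_iff.mp hd).2 a had, hb⟩

end PairBasis

theorem LaurentPolynomial.T_ne_one {R : Type*} [Semiring R] [Nontrivial R] {n : ℤ} (hn : n ≠ 0) :
    (T n : R[T;T⁻¹]) ≠ 1 := by
  intro h
  have := congrArg degree h
  rw [← T_zero, degree_T, degree_T] at this
  exact hn (WithBot.coe_injective this)

/-- The `R = ℤ[t,t⁻¹]`-submodule `M = {(p,q) : (tⁿ - 1) ∣ (p - q)}` of `R × R` is free with
basis `{(1 - tⁿ, 0), (1, 1)}`: these two elements are `R`-linearly independent and span `M`. -/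
theorem stmt0 (n : ℕ) (hn : 1 ≤ n)
    (v : Fin 2 → LaurentPolynomial ℤ × LaurentPolynomial ℤ)
    (hv0 : v 0 = (1 - T (n : ℤ), 0)) (hv1 : v 1 = (1, 1)) :
    LinearIndependent (LaurentPolynomial ℤ) v ∧
      ∀ x : LaurentPolynomial ℤ × LaurentPolynomial ℤ,
        x ∈ Submodule.span (LaurentPolynomial ℤ) (Set.range v) ↔
          (T (n : ℤ) - 1) ∣ (x.1 - x.2) := by
  have hv : v = ![(1 - T (n : ℤ), 0), (1, 1)] := by
    ext i : 1
    fin_cases i <;> simp [hv0, hv1]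
  have hd : (1 - T (n : ℤ) : LaurentPolynomial ℤ) ≠ 0 :=
    sub_ne_zero.mpr (T_ne_one (by omega)).symm
  refine ⟨hv ▸ linearIndependent_pair_one_one (mem_nonZeroDivisors_of_ne_zero hd), fun x => ?_⟩
  rw [hv, Matrix.range_cons, Matrix.range_cons, Matrix.range_empty, Set.union_empty,
    Set.singleton_union, mem_span_pair_one_one_iff,
    ← neg_sub (T (n : ℤ)) 1, neg_dvd]
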